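/- arXiv:2512.18515 — 2 statements merged into one kernel-verified Lean document; each statement's English description precedes it below -/
import Mathlib

section
/- (Planar invariance) Let a, b : [0,∞) → ℝ be continuous with a(t) ≤ 0 and b(t) ≤ 0 for all t, and let x solve x' = (a(t)-b(t))·x² + 2b(t)·x - b(t) with x(0) ∈ [0,1]. Then x(t) ∈ [0,1] for all t ≥ 0. -/
/-!
Since `(a - b) x² + 2 b x - b = a x² - b (1 - x)²`, the right-hand side is `≥ a x²` (as `b ≤ 0`),
and `1 - x` solves the same equation with `a` and `b` exchanged; so it suffices to show that
`x' ≥ a x²` with `x(0) ≥ 0` forces `x ≥ 0`. On a compact interval `|a| ≤ C`, so where `-x` is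
positive and small, `(-x)' ≤ C (-x)² ≤ C (-x)`; an exponential fence `c e^{L (t - T)}` with `L > C`
and `c` arbitrarily small then keeps `-x` below every positive level.
-/

open Set Real

theorem nonpos_of_deriv_le_mul_near_zero {f f' : ℝ → ℝ} {a b K r : ℝ} (hr : 0 < r)
    (hf : ContinuousOn f (Icc a b)) (hf' : ∀ s ∈ Ico a b, HasDerivWithinAt f (f' s) (Ici s) s)
    (ha : f a ≤ 0) (bound : ∀ s ∈ Ico a b, 0 < f s → f s ≤ r → f' s ≤ K * f s) :
    ∀ ⦃s⦄, s ∈ Icc a b → f s ≤ 0 := by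
  intro s hs
  refine le_of_forall_pos_le_add fun δ hδ => ?_
  set L := |K| + 1
  set c := min r δ
  set B : ℝ → ℝ := fun t => c * exp (L * (t - b))
  have hc : 0 < c := lt_min hr hδ
  have hL : K < L := by linarith [le_abs_self K]
  have hB' : ∀ t, HasDerivAt B (L * B t) t := fun t => by
    have := (((hasDerivAt_id t).sub_const b).const_mul L).exp.const_mul c
    rwa [show c * (exp (L * (id t - b)) * (L * 1)) = L * B t by simp only [B, id]; ring] at this
  have hB_le : ∀ t ≤ b, B t ≤ c := fun t ht =>
    mul_le_of_le_one_right hc.le <| exp_le_one_iff.2 <|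
      mul_nonpos_of_nonneg_of_nonpos (by positivity) (by linarith)
  have fence : ∀ t ∈ Ico a b, f t = B t → f' t < L * B t := by
    intro t ht hft
    have hBt : 0 < B t := by positivity
    calc f' t ≤ K * f t :=
          bound t ht (hft ▸ hBt) (hft ▸ (hB_le t ht.2.le).trans (min_le_left _ _))
      _ < L * B t := by rw [hft]; exact mul_lt_mul_of_pos_right hL hBt
  calc f s ≤ B s :=
        image_le_of_deriv_right_lt_deriv_boundary hf hf' (ha.trans (by positivity)) hB' fence hs
    _ ≤ c := hB_le s hs.2
    _ ≤ 0 + δ := by rw [zero_add]; exact min_le_right _ _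

theorem nonneg_of_mul_sq_le_deriv {a x x' : ℝ → ℝ} (ha : Continuous a)
    (hx : ∀ t, 0 ≤ t → HasDerivAt x (x' t) t) (hx' : ∀ t, 0 ≤ t → x t < 0 → a t * x t ^ 2 ≤ x' t)
    (hx0 : 0 ≤ x 0) : ∀ t, 0 ≤ t → 0 ≤ x t := by
  intro T hT
  obtain ⟨C, hC⟩ := (isCompact_Icc (a := 0) (b := T)).exists_bound_of_continuousOn ha.continuousOn
  have bound : ∀ s ∈ Ico 0 T, 0 < -x s → -x s ≤ 1 → -x' s ≤ C * -x s := by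
    intro s hs hpos hle
    have haC : |a s| ≤ C := hC s (Ico_subset_Icc_self hs)
    have hsq : x s ^ 2 ≤ -x s := by nlinarith
    calc -x' s ≤ -a s * x s ^ 2 := by linarith [hx' s hs.1 (neg_pos.1 hpos)]
      _ ≤ |a s| * x s ^ 2 := by gcongr; exact neg_le_abs _
      _ ≤ C * x s ^ 2 := by gcongr
      _ ≤ C * -x s := by gcongr; exact (abs_nonneg _).trans haC
  have := nonpos_of_deriv_le_mul_near_zero one_pos
    (fun s hs => (hx s hs.1).neg.continuousAt.continuousWithinAt)
    (fun s hs => (hx s hs.1).neg.hasDerivWithinAt) (neg_nonpos.2 hx0) bound ⟨hT, le_rfl⟩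
  exact neg_nonpos.1 this

theorem planar_invariance (a b x : ℝ → ℝ)
    (hac : Continuous a) (hbc : Continuous b)
    (ha : ∀ t, 0 ≤ t → a t ≤ 0) (hb : ∀ t, 0 ≤ t → b t ≤ 0)
    (hx : ∀ t, 0 ≤ t → HasDerivAt x
      ((a t - b t) * x t ^ 2 + 2 * b t * x t - b t) t)
    (hx0 : 0 ≤ x 0) (hx1 : x 0 ≤ 1) :
    ∀ t, 0 ≤ t → 0 ≤ x t ∧ x t ≤ 1 := by
  have hrhs : ∀ t, (a t - b t) * x t ^ 2 + 2 * b t * x t - b t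
      = a t * x t ^ 2 - b t * (1 - x t) ^ 2 := fun t => by ring
  simp only [hrhs] at hx
  have lower := nonneg_of_mul_sq_le_deriv hac hx
    (fun t ht _ => by nlinarith [hb t ht, sq_nonneg (1 - x t)]) hx0
  have upper := nonneg_of_mul_sq_le_deriv (x := fun t => 1 - x t) hbc
    (fun t ht => (hx t ht).const_sub 1)
    (fun t ht _ => by nlinarith [ha t ht, sq_nonneg (x t)]) (sub_nonneg.2 hx1)
  exact fun t ht => ⟨lower t ht, sub_nonneg.1 (upper t ht)⟩
end

section
/- (Exponential growth rate) If α·β > 0 and z(t) = exp(t·S)·z₀ with S = [[0,-β],[-α,0]] and z₀ not in the stable eigenspace (i.e. the component of z₀ along the eigenvector with eigenvalue √(αβ) is nonzero), then (1/t)·log‖z(t)‖ → √(αβ) as t → ∞. -/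
/-!
The two vectors in the decomposition of `z₀` are eigenvectors of `S` for `±√(αβ)`, and `exp (t • S)`
acts on an eigenvector for `μ` as multiplication by `e^{tμ}` (apply `M ↦ M *ᵥ v` termwise to the
exponential series). Hence `z t = e^{κt} • (c₊ • v₊ + e^{-2κt} • c₋ • v₋)`; the bracket tends to
`c₊ • v₊ ≠ 0`, so `log ‖z t‖ / t = κ + O(1/t)`.
-/

open scoped Matrix
open Filter Topology NormedSpace

namespace Matrix

variable {n R : Type*} [Fintype n] [DecidableEq n]

theorem pow_mulVec_of_mulVec_eq_smul [CommSemiring R] {A : Matrix n n R} {v : n → R} {μ : R}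
    (h : A *ᵥ v = μ • v) (k : ℕ) : (A ^ k) *ᵥ v = μ ^ k • v := by
  induction k with
  | zero => simp
  | succ k ih => rw [pow_succ', ← mulVec_mulVec, ih, mulVec_smul, h, smul_smul, pow_succ]

section

-- `exp` is defined without a norm; one is needed only to sum its series.
attribute [local instance] Matrix.linftyOpNormedRing Matrix.linftyOpNormedAlgebra

theorem exp_mulVec_of_mulVec_eq_smul {𝕂 : Type*} [RCLike 𝕂] {A : Matrix n n 𝕂} {v : n → 𝕂}
    {μ : 𝕂} (h : A *ᵥ v = μ • v) : exp A *ᵥ v = exp μ • v := by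
  have hA : HasSum (fun k => ((k.factorial⁻¹ : 𝕂) • A ^ k) *ᵥ v) (exp A *ᵥ v) :=
    (exp_series_hasSum_exp' (𝕂 := 𝕂) A).map (mulVec.addMonoidHomLeft v)
      (continuous_id.matrix_mulVec continuous_const)
  have hμ : HasSum (fun k => ((k.factorial⁻¹ : 𝕂) • μ ^ k) • v) (exp μ • v) :=
    (exp_series_hasSum_exp' (𝕂 := 𝕂) μ).smul_const v
  refine hA.unique (hμ.congr_fun fun k => ?_)
  rw [smul_mulVec, pow_mulVec_of_mulVec_eq_smul h, smul_smul, smul_eq_mul]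

theorem exp_smul_mulVec_of_mulVec_eq_smul {A : Matrix n n ℝ} {v : n → ℝ} {μ : ℝ}
    (h : A *ᵥ v = μ • v) (t : ℝ) : exp (t • A) *ᵥ v = Real.exp (μ * t) • v := by
  rw [exp_mulVec_of_mulVec_eq_smul (by rw [smul_mulVec, h, smul_smul]), Real.exp_eq_exp_ℝ,
    mul_comm]

end

end Matrix

section GrowthRate

variable {E : Type*} [NormedAddCommGroup E] [NormedSpace ℝ E]

theorem tendsto_log_norm_exp_mul_smul_div_atTop {w : ℝ → E} {a : E} (ha : a ≠ 0)
    (hw : Tendsto w atTop (𝓝 a)) (κ : ℝ) :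
    Tendsto (fun t => Real.log ‖Real.exp (κ * t) • w t‖ / t) atTop (𝓝 κ) := by
  have hnorm : Tendsto (fun t => ‖w t‖) atTop (𝓝 ‖a‖) := hw.norm
  have hlog : Tendsto (fun t => Real.log ‖w t‖ / t) atTop (𝓝 0) :=
    (hnorm.log (norm_ne_zero_iff.mpr ha)).div_atTop tendsto_id
  refine (by simpa using hlog.const_add κ : Tendsto _ atTop (𝓝 κ)).congr' ?_
  filter_upwards [hnorm.eventually_ne (norm_ne_zero_iff.mpr ha), eventually_ne_atTop 0]
    with t hwt ht
  rw [norm_smul, Real.norm_of_nonneg (Real.exp_nonneg _), Real.log_mul (Real.exp_ne_zero _) hwt,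
    Real.log_exp, add_div, mul_div_cancel_right₀ κ ht]

theorem tendsto_log_norm_exp_smul_add_exp_neg_smul_div_atTop {κ : ℝ} (hκ : 0 < κ) {a : E}
    (ha : a ≠ 0) (b : E) :
    Tendsto (fun t => Real.log ‖Real.exp (κ * t) • a + Real.exp (-(κ * t)) • b‖ / t) atTop
      (𝓝 κ) := by
  have hdecay : Tendsto (fun t => Real.exp (-(2 * κ) * t)) atTop (𝓝 0) :=
    Real.tendsto_exp_atBot.comp (tendsto_id.const_mul_atTop_of_neg (by linarith))
  have hw : Tendsto (fun t => a + Real.exp (-(2 * κ) * t) • b) atTop (𝓝 a) := by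
    simpa using tendsto_const_nhds.add (hdecay.smul_const b)
  refine (tendsto_log_norm_exp_mul_smul_div_atTop ha hw κ).congr fun t => ?_
  rw [smul_add, smul_smul, ← Real.exp_add]
  ring_nf

end GrowthRate

theorem antidiagonal_mulVec_eigenvector_pos {α β : ℝ} (hα : 0 ≤ α) (hβ : 0 ≤ β) :
    !![0, -β; -α, 0] *ᵥ ![√β, -√α] = √(α * β) • ![√β, -√α] := by
  rw [Real.sqrt_mul hα]
  ext i
  fin_cases i <;> simp [Matrix.mulVec, dotProduct, Fin.sum_univ_two]
  · linear_combination -(√α) * Real.mul_self_sqrt hβ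
  · linear_combination -(√β) * Real.mul_self_sqrt hα

theorem antidiagonal_mulVec_eigenvector_neg {α β : ℝ} (hα : 0 ≤ α) (hβ : 0 ≤ β) :
    !![0, -β; -α, 0] *ᵥ ![√β, √α] = -√(α * β) • ![√β, √α] := by
  rw [Real.sqrt_mul hα]
  ext i
  fin_cases i <;> simp [Matrix.mulVec, dotProduct, Fin.sum_univ_two]
  · linear_combination -(√α) * Real.mul_self_sqrt hβ
  · linear_combination -(√β) * Real.mul_self_sqrt hα

theorem lanchester_growth_rate (α β : ℝ) (hα : 0 < α) (hβ : 0 < β)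
    (κ : ℝ) (hκ : κ = Real.sqrt (α * β))
    (S : Matrix (Fin 2) (Fin 2) ℝ) (hS : S = !![0, -β; -α, 0])
    (z₀ : Fin 2 → ℝ) (cplus cminus : ℝ)
    (hdecomp : z₀ = cplus • ![Real.sqrt β, -Real.sqrt α] +
      cminus • ![Real.sqrt β, Real.sqrt α])
    (hcplus : cplus ≠ 0)
    (z : ℝ → Fin 2 → ℝ)
    (hz : ∀ t, z t = (NormedSpace.exp (t • S)).mulVec z₀) :
    Filter.Tendsto (fun t => Real.log ‖z t‖ / t) Filter.atTop (nhds κ) := by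
  subst hκ hS
  have hsol : ∀ t, z t = Real.exp (√(α * β) * t) • cplus • ![√β, -√α] +
      Real.exp (-(√(α * β) * t)) • cminus • ![√β, √α] := fun t => by
    rw [hz, hdecomp, Matrix.mulVec_add, Matrix.mulVec_smul, Matrix.mulVec_smul,
      Matrix.exp_smul_mulVec_of_mulVec_eq_smul (antidiagonal_mulVec_eigenvector_pos hα.le hβ.le),
      Matrix.exp_smul_mulVec_of_mulVec_eq_smul (antidiagonal_mulVec_eigenvector_neg hα.le hβ.le),
      smul_comm cplus, smul_comm cminus, neg_mul]
  have hv : ![√β, -√α] ≠ 0 := fun h => by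
    simpa [(Real.sqrt_pos.2 hβ).ne'] using congr_fun h 0
  simpa only [hsol] using tendsto_log_norm_exp_smul_add_exp_neg_smul_div_atTop
    (Real.sqrt_pos.2 (mul_pos hα hβ)) (smul_ne_zero hcplus hv) (cminus • ![√β, √α])
end
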